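/- arXiv:1901.09533 — 6 statements merged into one kernel-verified Lean document; each statement's English description precedes it below -/
import Mathlib

section
/- For m ≥ 2, the map u : Z_{2m} → Z_{2m-1} defined by u(a) = a-1 if 0 < a ≤ m and u(a) = a+1 if -m ≤ a < 0 is a surjective homomorphism of Sugihara algebras, i.e., it preserves min, max, negation ¬a = -a, and the Sugihara implication. -/
/-- Sugihara implication on the chain of integers. -/
def sImp (a b : ℤ) : ℤ := if a ≤ b then max (-a) b else min (-a) b

/-- Derived fusion operation. -/
def sFus (a b : ℤ) : ℤ := -(sImp a (-b))

/-- Universe of the Sugihara algebra Z_{2m-1}. -/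
def Zodd (m : ℤ) : Set ℤ := {a | -(m-1) ≤ a ∧ a ≤ m-1}

/-- Universe of the Sugihara algebra Z_{2m}. -/
def Zeven (m : ℤ) : Set ℤ := {a | -m ≤ a ∧ a ≤ m ∧ a ≠ 0}

/-- The collapsing map from Z_{2m} onto Z_{2m-1}. -/
def uMap (a : ℤ) : ℤ := if 0 < a then a - 1 else a + 1

/-!
On the nonzero integers `u` is monotone and odd, so it commutes with `min`, `max` and negation.
The implication `a → b` is `max (-a) b` or `min (-a) b` according as `a ≤ b`; `u` respects this
case split except on the pair `-1 < 1`, whose images coincide at `0`, and there `max (-0) 0` and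
`min (-0) 0` agree anyway.
-/

lemma uMap_of_pos {a : ℤ} (h : 0 < a) : uMap a = a - 1 := if_pos h

lemma uMap_of_neg {a : ℤ} (h : a < 0) : uMap a = a + 1 := if_neg h.not_gt

lemma monotoneOn_uMap : MonotoneOn uMap {a | a ≠ 0} := by
  intro a ha b hb hab
  simp only [Set.mem_ofPred_eq, uMap] at *
  split_ifs <;> omega

lemma uMap_neg {a : ℤ} (ha : a ≠ 0) : uMap (-a) = -uMap a := by
  rcases ha.lt_or_gt with h | h
  · rw [uMap_of_neg h, uMap_of_pos (neg_pos.mpr h)]; ring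
  · rw [uMap_of_pos h, uMap_of_neg (neg_neg_of_pos h)]; ring

lemma sImp_of_le {a b : ℤ} (h : a ≤ b) : sImp a b = max (-a) b := if_pos h

lemma sImp_of_lt {a b : ℤ} (h : b < a) : sImp a b = min (-a) b := if_neg h.not_ge

theorem uMap_sImp {a b : ℤ} (ha : a ≠ 0) (hb : b ≠ 0) :
    uMap (sImp a b) = sImp (uMap a) (uMap b) := by
  have hna : -a ≠ 0 := neg_ne_zero.mpr ha
  rcases le_or_gt a b with hab | hba
  · rw [sImp_of_le hab, monotoneOn_uMap.map_max hna hb, uMap_neg ha,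
      sImp_of_le (monotoneOn_uMap ha hb hab)]
  · rw [sImp_of_lt hba, monotoneOn_uMap.map_min hna hb, uMap_neg ha]
    rcases (monotoneOn_uMap hb ha hba.le).lt_or_eq with hlt | heq
    · rw [sImp_of_lt hlt]
    · have hzero : uMap a = 0 := by
        simp only [uMap] at heq ⊢
        split_ifs at heq ⊢ <;> omega
      rw [heq, hzero]
      simp [sImp]

lemma uMap_mem_Zodd {m a : ℤ} (ha : a ∈ Zeven m) : uMap a ∈ Zodd m := by
  obtain ⟨h₁, h₂, h₃⟩ := ha
  simp only [Zodd, Set.mem_ofPred_eq, uMap]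
  split_ifs <;> omega

lemma exists_mem_Zeven_uMap_eq {m b : ℤ} (hb : b ∈ Zodd m) : ∃ a ∈ Zeven m, uMap a = b := by
  obtain ⟨h₁, h₂⟩ := hb
  rcases le_or_gt 0 b with h | h
  · exact ⟨b + 1, ⟨by omega, by omega, by omega⟩, by rw [uMap_of_pos (by omega)]; ring⟩
  · exact ⟨b - 1, ⟨by omega, by omega, by omega⟩, by rw [uMap_of_neg (by omega)]; ring⟩

theorem uMap_surjective_hom_general (m : ℤ) :
    (∀ a ∈ Zeven m, uMap a ∈ Zodd m) ∧
    (∀ b ∈ Zodd m, ∃ a ∈ Zeven m, uMap a = b) ∧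
    (∀ a ∈ Zeven m, ∀ b ∈ Zeven m,
      uMap (min a b) = min (uMap a) (uMap b) ∧
      uMap (max a b) = max (uMap a) (uMap b) ∧
      uMap (-a) = -(uMap a) ∧
      uMap (sImp a b) = sImp (uMap a) (uMap b)) := by
  refine ⟨fun a ↦ uMap_mem_Zodd, fun b ↦ exists_mem_Zeven_uMap_eq, fun a ha b hb ↦ ?_⟩
  have ha₀ : a ≠ 0 := ha.2.2
  have hb₀ : b ≠ 0 := hb.2.2
  exact ⟨monotoneOn_uMap.map_min ha₀ hb₀, monotoneOn_uMap.map_max ha₀ hb₀, uMap_neg ha₀,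
    uMap_sImp ha₀ hb₀⟩

/-- For m ≥ 2, u is a surjective Sugihara algebra homomorphism
from Z_{2m} onto Z_{2m-1}. -/
theorem uMap_surjective_hom (m : ℤ) (hm : 2 ≤ m) :
    (∀ a ∈ Zeven m, uMap a ∈ Zodd m) ∧
    (∀ b ∈ Zodd m, ∃ a ∈ Zeven m, uMap a = b) ∧
    (∀ a ∈ Zeven m, ∀ b ∈ Zeven m,
      uMap (min a b) = min (uMap a) (uMap b) ∧
      uMap (max a b) = max (uMap a) (uMap b) ∧
      uMap (-a) = -(uMap a) ∧
      uMap (sImp a b) = sImp (uMap a) (uMap b)) :=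
  uMap_surjective_hom_general m
end

section
/- The map g : Z_{2m-1} → Z_{2m-1} defined by g(a) = a-1 if a > 0, g(a) = a+1 if a < 0, and g(0) = 0 is an endomorphism of the Sugihara algebra Z_{2m-1} (preserving min, max, negation, and implication), for m ≥ 2. -/
/-- The endomorphism g of Z_{2m-1}. -/
def gMap (a : ℤ) : ℤ := if 0 < a then a - 1 else if a < 0 then a + 1 else 0

/-!
`g` is monotone and odd, so it commutes with `min`, `max` and negation, and `sImp`, which is
`max (-a) b` or `min (-a) b` according as `a ≤ b` or not, is preserved as long as the case
distinction survives. It only fails to survive when `b < a` but `g a = g b`, which forces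
`g a = g b = 0`, where both branches of `sImp` give `0`. Closure holds since `|g a| ≤ |a|`.
-/

theorem map_sImp_of_monotone {f : ℤ → ℤ} (hf : Monotone f) (hodd : ∀ a, f (-a) = -f a)
    (hcollapse : ∀ a b, b < a → f a = f b → f a = 0) (a b : ℤ) :
    f (sImp a b) = sImp (f a) (f b) := by
  unfold sImp
  by_cases hab : a ≤ b
  · rw [if_pos hab, if_pos (hf hab), hf.map_max, hodd]
  · have hba : b < a := lt_of_not_ge hab
    rw [if_neg hab, hf.map_min, hodd]
    by_cases hfab : f a ≤ f b
    · have heq : f a = f b := le_antisymm hfab (hf hba.le)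
      have hzero : f a = 0 := hcollapse a b hba heq
      rw [← heq, hzero]
      simp
    · rw [if_neg hfab]

theorem gMap_monotone : Monotone gMap := by
  intro a b hab
  simp only [gMap]
  split_ifs <;> omega

theorem gMap_neg (a : ℤ) : gMap (-a) = -gMap a := by
  simp only [gMap]
  split_ifs <;> omega

theorem gMap_eq_zero_of_lt_of_eq {a b : ℤ} (hba : b < a) (h : gMap a = gMap b) :
    gMap a = 0 := by
  simp only [gMap] at *
  split_ifs at * <;> omega

theorem abs_gMap_le (a : ℤ) : |gMap a| ≤ |a| := by
  simp only [gMap]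
  split_ifs <;> simp only [abs_le, le_abs] <;> omega

theorem mem_Zodd_iff {m a : ℤ} : a ∈ Zodd m ↔ |a| ≤ m - 1 :=
  abs_le.symm

theorem gMap_mem_Zodd {m a : ℤ} (ha : a ∈ Zodd m) : gMap a ∈ Zodd m :=
  mem_Zodd_iff.2 ((abs_gMap_le a).trans (mem_Zodd_iff.1 ha))

theorem gMap_endomorphism_general (m : ℤ) :
    (∀ a ∈ Zodd m, gMap a ∈ Zodd m) ∧
    (∀ a ∈ Zodd m, ∀ b ∈ Zodd m,
      gMap (min a b) = min (gMap a) (gMap b) ∧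
      gMap (max a b) = max (gMap a) (gMap b) ∧
      gMap (-a) = -(gMap a) ∧
      gMap (sImp a b) = sImp (gMap a) (gMap b)) :=
  ⟨fun _ ha => gMap_mem_Zodd ha, fun a _ b _ =>
    ⟨gMap_monotone.map_min, gMap_monotone.map_max, gMap_neg a,
      map_sImp_of_monotone gMap_monotone gMap_neg
        (fun _ _ => gMap_eq_zero_of_lt_of_eq) a b⟩⟩

/-- For m ≥ 2, g is an endomorphism of the Sugihara algebra Z_{2m-1}. -/
theorem gMap_endomorphism (m : ℤ) (hm : 2 ≤ m) :
    (∀ a ∈ Zodd m, gMap a ∈ Zodd m) ∧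
    (∀ a ∈ Zodd m, ∀ b ∈ Zodd m,
      gMap (min a b) = min (gMap a) (gMap b) ∧
      gMap (max a b) = max (gMap a) (gMap b) ∧
      gMap (-a) = -(gMap a) ∧
      gMap (sImp a b) = sImp (gMap a) (gMap b)) :=
  gMap_endomorphism_general m
end

section
/- The only Sugihara monoid endomorphism of W_{2m} is the identity map. -/
/-- The only Sugihara monoid endomorphism of W_{2m} is the identity. -/
theorem even_monoid_endo_is_id (m : ℤ) (hm : 1 ≤ m) (h : ℤ → ℤ)
    (hmem : ∀ a ∈ Zeven m, h a ∈ Zeven m)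
    (hmin : ∀ a ∈ Zeven m, ∀ b ∈ Zeven m, h (min a b) = min (h a) (h b))
    (hmax : ∀ a ∈ Zeven m, ∀ b ∈ Zeven m, h (max a b) = max (h a) (h b))
    (hneg : ∀ a ∈ Zeven m, h (-a) = -(h a))
    (himp : ∀ a ∈ Zeven m, ∀ b ∈ Zeven m, h (sImp a b) = sImp (h a) (h b))
    (ht : h 1 = 1) :
    ∀ a ∈ Zeven m, h a = a := by
  have negmem : ∀ a ∈ Zeven m, (-a) ∈ Zeven m := by
    rintro a ⟨h1, h2, h3⟩
    exact ⟨by omega, by omega, by omega⟩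
  have maxmem : ∀ a ∈ Zeven m, ∀ b ∈ Zeven m, max a b ∈ Zeven m := by
    intro a ha b hb
    rcases le_total a b with hle | hle
    · rw [max_eq_right hle]; exact hb
    · rw [max_eq_left hle]; exact ha
  have minmem : ∀ a ∈ Zeven m, ∀ b ∈ Zeven m, min a b ∈ Zeven m := by
    intro a ha b hb
    rcases le_total a b with hle | hle
    · rw [min_eq_left hle]; exact ha
    · rw [min_eq_right hle]; exact hb
  have mono : ∀ a ∈ Zeven m, ∀ b ∈ Zeven m, a ≤ b → h a ≤ h b := by
    intro a ha b hb hab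
    have e := hmax a ha b hb
    rw [max_eq_right hab] at e
    rw [e]
    exact le_max_left _ _
  have strict : ∀ a ∈ Zeven m, ∀ b ∈ Zeven m, a < b → h a < h b := by
    intro a ha b hb hab
    rcases lt_or_eq_of_le (mono a ha b hb hab.le) with h' | heq
    · exact h'
    exfalso
    -- compute the two implications
    have e1 : h (max (-a) b) = max (-(h b)) (h b) := by
      have e := himp a ha b hb
      rw [heq, show sImp a b = max (-a) b from if_pos hab.le] at e
      rw [e]; simp [sImp]
    have e2 : h (min (-b) a) = max (-(h b)) (h b) := by
      have e := himp b hb a ha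
      rw [heq, show sImp b a = min (-b) a from if_neg (not_le.mpr hab)] at e
      rw [e]; simp [sImp]
    have maxm : max (-a) b ∈ Zeven m := maxmem _ (negmem a ha) _ hb
    have minm : min (-b) a ∈ Zeven m := minmem _ (negmem b hb) _ ha
    have s1 : max (-(h b)) (h b) ≤ h a := by
      rw [← e2]; exact mono _ minm _ ha (min_le_right _ _)
    have s2 : h a ≤ max (-(h b)) (h b) := by
      rw [← e1]
      exact mono _ ha _ maxm (le_trans hab.le (le_max_right _ _))
    have ha_eq : h a = max (-(h b)) (h b) := le_antisymm s2 s1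
    have s3 : max (-(h b)) (h b) ≤ h (-a) := by
      rw [← e2]
      exact mono _ minm _ (negmem a ha) (le_trans (min_le_left _ _) (by omega))
    have s4 : h (-a) ≤ max (-(h b)) (h b) := by
      rw [← e1]; exact mono _ (negmem a ha) _ maxm (le_max_left _ _)
    have hna_eq : h (-a) = max (-(h b)) (h b) := le_antisymm s4 s3
    have hn := hneg a ha
    rw [hna_eq, ha_eq] at hn
    have hM : max (-(h b)) (h b) = 0 := by linarith
    have hc0 : h b = 0 := by
      rcases le_total (-(h b)) (h b) with hle | hle
      · rw [max_eq_right hle] at hM; exact hM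
      · rw [max_eq_left hle] at hM; omega
    exact (hmem b hb).2.2 hc0
  -- lower bound on positives
  have pos : ∀ a : ℤ, 1 ≤ a → a ≤ m → a ≤ h a := by
    intro a h1
    refine Int.le_induction (motive := fun a _ => a ≤ m → a ≤ h a) ?_ ?_ a h1
    · intro _; rw [ht]
    · intro n hn ih hnm
      have hn' : n ≤ m := by omega
      have mem1 : n ∈ Zeven m := ⟨by omega, by omega, by omega⟩
      have mem2 : (n + 1) ∈ Zeven m := ⟨by omega, by omega, by omega⟩
      have := strict _ mem1 _ mem2 (by omega)
      have := ih hn'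
      omega
  -- upper bound on positives
  have upper : ∀ a : ℤ, a ≤ m → 1 ≤ a → h a ≤ a := by
    intro a ham
    refine Int.le_induction_down (motive := fun a _ => 1 ≤ a → h a ≤ a) ?_ ?_ a ham
    · intro _
      have memm : m ∈ Zeven m := ⟨by omega, by omega, by omega⟩
      exact (hmem m memm).2.1
    · intro n hn ih h1
      have mem1 : (n - 1) ∈ Zeven m := ⟨by omega, by omega, by omega⟩
      have mem2 : n ∈ Zeven m := ⟨by omega, by omega, by omega⟩
      have := strict _ mem1 _ mem2 (by omega)
      have := ih (by omega)
      omega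
  intro a ha
  obtain ⟨h1, h2, h3⟩ := ha
  rcases lt_or_gt_of_ne h3 with hneg' | hpos
  · -- a < 0
    have hpa : 1 ≤ -a := by omega
    have hpm : -a ≤ m := by omega
    have heqp : h (-a) = -a := le_antisymm (upper _ hpm hpa) (pos _ hpa hpm)
    have := hneg (-a) (negmem a ⟨h1, h2, h3⟩)
    rw [neg_neg] at this
    rw [this, heqp, neg_neg]
  · exact le_antisymm (upper a h2 (by omega)) (pos a (by omega) h2)
end

section
/- In the three-element Kleene algebra 3, let β⁻, β⁺ : {0,a,1} → {0,1} be the lattice homomorphisms to the two-element lattice with β⁻(a) = 1 and β⁺(a) = 0 (both sending 0↦0, 1↦1). Then the set {(x,y) : β⁻(x) ≤ β⁻(y)} has as its unique maximal subalgebra (under the Kleene operations acting coordinatewise) the partial order ≼ on {0,a,1} with 0 ≺ a, 1 ≺ a, and 0,1 incomparable; i.e., ≼ = {(0,0),(a,a),(1,1),(0,a),(1,a)} is closed under ∧, ∨, ¬ coordinatewise and contains every subalgebra of {(x,y) : β⁻(x) ≤ β⁻(y)}. -/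
/-!
In the encoding `0, a, 1 ↦ 0, 1, 2`, the relation `R = (β⁻, β⁻)⁻¹(≤)` consists of the diagonal,
the pairs `(x, a)`, and the two pairs `(0, 1)`, `(a, 1)`. Negation sends the latter to `(1, 0)` and
`(a, 0)`, which are not in `R`, so every negation-closed subset of `R` lies in `≼`. Conversely `≼`,
the union of the diagonal and the pairs `(x, a)`, is closed under negation, meet and join.
-/

/-- Universe of the three-element Kleene algebra, encoded as {0,1,2} ⊆ ℤ
(0 ↦ 0, a ↦ 1, 1 ↦ 2). -/
def K3 : Set ℤ := {0, 1, 2}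

/-- Kleene negation. -/
def kneg (x : ℤ) : ℤ := 2 - x

/-- The carrier map β⁻ (0 ↦ 0, a ↦ 1, 1 ↦ 1). -/
def betaMinus (x : ℤ) : ℤ := min x 1

/-- The partial order ≼ with 0 ≺ a, 1 ≺ a and 0, 1 incomparable. -/
def Pord : Set (ℤ × ℤ) := {(0, 0), (1, 1), (2, 2), (0, 1), (2, 1)}

def betaMinusLE : Set (ℤ × ℤ) := {p | p.1 ∈ K3 ∧ p.2 ∈ K3 ∧ betaMinus p.1 ≤ betaMinus p.2}

lemma mem_k3 {x : ℤ} : x ∈ K3 ↔ 0 ≤ x ∧ x ≤ 2 := by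
  simp only [K3, Set.mem_insert_iff, Set.mem_singleton_iff]
  omega

lemma mem_pord {p : ℤ × ℤ} : p ∈ Pord ↔ p.1 ∈ K3 ∧ p.2 ∈ K3 ∧ (p.1 = p.2 ∨ p.2 = 1) := by
  obtain ⟨x, y⟩ := p
  simp only [Pord, Set.mem_insert_iff, Set.mem_singleton_iff, Prod.mk.injEq, mem_k3]
  omega

lemma mem_betaMinusLE {p : ℤ × ℤ} :
    p ∈ betaMinusLE ↔ p.1 ∈ K3 ∧ p.2 ∈ K3 ∧ min p.1 1 ≤ min p.2 1 :=
  Iff.rfl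

lemma pord_subset_betaMinusLE : Pord ⊆ betaMinusLE := by
  intro p hp
  rw [mem_pord, mem_k3, mem_k3] at hp
  rw [mem_betaMinusLE, mem_k3, mem_k3]
  omega

section Closure

variable {p q : ℤ × ℤ}

lemma min_mem_pord (hp : p ∈ Pord) (hq : q ∈ Pord) : (min p.1 q.1, min p.2 q.2) ∈ Pord := by
  rw [mem_pord, mem_k3, mem_k3] at hp hq ⊢
  omega

lemma max_mem_pord (hp : p ∈ Pord) (hq : q ∈ Pord) : (max p.1 q.1, max p.2 q.2) ∈ Pord := by
  rw [mem_pord, mem_k3, mem_k3] at hp hq ⊢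
  omega

lemma kneg_mem_pord (hp : p ∈ Pord) : (kneg p.1, kneg p.2) ∈ Pord := by
  rw [mem_pord, mem_k3, mem_k3] at hp ⊢
  simp only [kneg]
  omega

lemma mem_pord_of_kneg_mem_betaMinusLE (hp : p ∈ betaMinusLE)
    (hneg : (kneg p.1, kneg p.2) ∈ betaMinusLE) : p ∈ Pord := by
  rw [mem_betaMinusLE, mem_k3, mem_k3] at hp hneg
  rw [mem_pord, mem_k3, mem_k3]
  simp only [kneg] at hneg
  omega

end Closure

/-- `≼` is the unique maximal subalgebra of `(β⁻, β⁻)⁻¹(≤)`. -/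
theorem pord_unique_maximal_subalgebra :
    (Pord ⊆ {p | p.1 ∈ K3 ∧ p.2 ∈ K3 ∧ betaMinus p.1 ≤ betaMinus p.2}) ∧
    (∀ p ∈ Pord, ∀ q ∈ Pord,
      (min p.1 q.1, min p.2 q.2) ∈ Pord ∧
      (max p.1 q.1, max p.2 q.2) ∈ Pord ∧
      (kneg p.1, kneg p.2) ∈ Pord) ∧
    (∀ S : Set (ℤ × ℤ),
      S ⊆ {p | p.1 ∈ K3 ∧ p.2 ∈ K3 ∧ betaMinus p.1 ≤ betaMinus p.2} →
      (∀ p ∈ S, ∀ q ∈ S,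
        (min p.1 q.1, min p.2 q.2) ∈ S ∧
        (max p.1 q.1, max p.2 q.2) ∈ S ∧
        (kneg p.1, kneg p.2) ∈ S) →
      S ⊆ Pord) :=
  ⟨pord_subset_betaMinusLE,
    fun _ hp _ hq => ⟨min_mem_pord hp hq, max_mem_pord hp hq, kneg_mem_pord hp⟩,
    fun _ hS hclosed _ hp => mem_pord_of_kneg_mem_betaMinusLE (hS hp) (hS (hclosed _ hp _ hp).2.2)⟩
end

section
/- For m ≥ 3 and any partial endomorphism e of the Sugihara algebra Z_{2(m-1)}, the map ē on Z_{2m} defined by ē(±1) = ±1, ē(a) = e(a-1)+1 for a > 1 with a-1 ∈ dom e, and ē(a) = e(a+1)-1 for a < -1 with a+1 ∈ dom e, is a partial endomorphism of the Sugihara monoid W_{2m} (it preserves min, max, negation, Sugihara implication, and the constant t = 1 on its domain). -/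
lemma sImp_mem_of_neg_mem {S : Set ℤ} (hS : ∀ a ∈ S, -a ∈ S) {a b : ℤ} (ha : a ∈ S)
    (hb : b ∈ S) : sImp a b ∈ S := by
  unfold sImp
  split_ifs
  · exact max_rec' S (hS a ha) hb
  · exact min_rec' S (hS a ha) hb

section StrictMonoOn

variable {S : Set ℤ} {f : ℤ → ℤ}

lemma StrictMonoOn.map_sImp (hf : StrictMonoOn f S) (hS : ∀ a ∈ S, -a ∈ S)
    (hneg : ∀ a ∈ S, f (-a) = -f a) {a b : ℤ} (ha : a ∈ S) (hb : b ∈ S) :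
    f (sImp a b) = sImp (f a) (f b) := by
  rcases le_or_gt a b with h | h
  · rw [sImp_of_le h, sImp_of_le (hf.monotoneOn ha hb h),
      hf.monotoneOn.map_max (hS a ha) hb, hneg a ha]
  · rw [sImp_of_lt h, sImp_of_lt (hf hb ha h),
      hf.monotoneOn.map_min (hS a ha) hb, hneg a ha]

lemma StrictMonoOn.pos_of_pos (hf : StrictMonoOn f S) (hS : ∀ a ∈ S, -a ∈ S)
    (hneg : ∀ a ∈ S, f (-a) = -f a) {a : ℤ} (ha : a ∈ S) (h : 0 < a) : 0 < f a := by
  have := hf (hS a ha) ha (by omega)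
  rw [hneg a ha] at this
  omega

lemma StrictMonoOn.neg_of_neg (hf : StrictMonoOn f S) (hS : ∀ a ∈ S, -a ∈ S)
    (hneg : ∀ a ∈ S, f (-a) = -f a) {a : ℤ} (ha : a ∈ S) (h : a < 0) : f a < 0 := by
  have := hf.pos_of_pos hS hneg (hS a ha) (by omega)
  rw [hneg a ha] at this
  omega

end StrictMonoOn

section Homomorphism

variable {D : Set ℤ} {e : ℤ → ℤ}

lemma monotoneOn_of_map_min (hmin : ∀ a ∈ D, ∀ b ∈ D, e (min a b) = min (e a) (e b)) :
    MonotoneOn e D := fun a ha b hb h => by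
  have := hmin a ha b hb
  rw [min_eq_left h] at this
  omega

lemma strictMonoOn_of_map_sImp (hne : ∀ a ∈ D, e a ≠ 0) (hD : ∀ a ∈ D, -a ∈ D)
    (hmin : ∀ a ∈ D, ∀ b ∈ D, e (min a b) = min (e a) (e b))
    (hneg : ∀ a ∈ D, e (-a) = -e a)
    (himp : ∀ a ∈ D, ∀ b ∈ D, e (sImp a b) = sImp (e a) (e b)) : StrictMonoOn e D := by
  intro a ha b hb hab
  refine lt_of_le_of_ne (monotoneOn_of_map_min hmin ha hb hab.le) fun heq => hne a ha ?_
  have h := himp b hb a ha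
  rw [sImp_of_lt hab, hmin _ (hD b hb) a ha, hneg b hb, heq, sImp_of_le le_rfl] at h
  omega

end Homomorphism

def liftDom (D : Set ℤ) : Set ℤ :=
  {1, -1} ∪ {a | 1 < a ∧ a - 1 ∈ D} ∪ {a | a < -1 ∧ a + 1 ∈ D}

def liftMap (e : ℤ → ℤ) (a : ℤ) : ℤ :=
  if a = 1 then 1 else if a = -1 then -1
  else if 1 < a then e (a - 1) + 1 else e (a + 1) - 1

section Lift

variable {D : Set ℤ} {e : ℤ → ℤ} {a : ℤ}

lemma mem_liftDom :
    a ∈ liftDom D ↔ a = 1 ∨ a = -1 ∨ (1 < a ∧ a - 1 ∈ D) ∨ (a < -1 ∧ a + 1 ∈ D) := by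
  simp only [liftDom, Set.mem_union, Set.mem_insert_iff, Set.mem_singleton_iff,
    Set.mem_ofPred_eq, or_assoc]

lemma one_mem_liftDom : (1 : ℤ) ∈ liftDom D := mem_liftDom.2 (Or.inl rfl)

lemma liftMap_one (e : ℤ → ℤ) : liftMap e 1 = 1 := if_pos rfl

lemma liftMap_neg_one (e : ℤ → ℤ) : liftMap e (-1) = -1 := by
  simp [liftMap]

lemma liftMap_of_one_lt (h : 1 < a) : liftMap e a = e (a - 1) + 1 := by
  rw [liftMap, if_neg (by omega), if_neg (by omega), if_pos h]

lemma liftMap_of_lt_neg_one (h : a < -1) : liftMap e a = e (a + 1) - 1 := by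
  rw [liftMap, if_neg (by omega), if_neg (by omega), if_neg (by omega)]

lemma neg_mem_liftDom (hD : ∀ a ∈ D, -a ∈ D) (ha : a ∈ liftDom D) : -a ∈ liftDom D := by
  rcases mem_liftDom.1 ha with rfl | rfl | ⟨h, hd⟩ | ⟨h, hd⟩
  · exact mem_liftDom.2 (Or.inr (Or.inl rfl))
  · exact mem_liftDom.2 (Or.inl (neg_neg 1))
  · refine mem_liftDom.2 (Or.inr (Or.inr (Or.inr ⟨by omega, ?_⟩)))
    simpa [neg_add_eq_sub] using hD _ hd
  · refine mem_liftDom.2 (Or.inr (Or.inr (Or.inl ⟨by omega, ?_⟩)))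
    simpa [sub_eq_add_neg, add_comm] using hD _ hd

lemma liftMap_neg (hneg : ∀ a ∈ D, e (-a) = -e a) (ha : a ∈ liftDom D) :
    liftMap e (-a) = -liftMap e a := by
  rcases mem_liftDom.1 ha with rfl | rfl | ⟨h, hd⟩ | ⟨h, hd⟩
  · rw [liftMap_one, liftMap_neg_one]
  · rw [neg_neg, liftMap_one, liftMap_neg_one, neg_neg]
  · rw [liftMap_of_lt_neg_one (by omega), liftMap_of_one_lt h, show -a + 1 = -(a - 1) by ring,
      hneg _ hd]
    ring
  · rw [liftMap_of_one_lt (by omega), liftMap_of_lt_neg_one h, show -a - 1 = -(a + 1) by ring,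
      hneg _ hd]
    ring

lemma liftDom_subset_Zeven {m : ℤ} (hm : 1 ≤ m) (hD : D ⊆ Zeven (m - 1)) :
    liftDom D ⊆ Zeven m := by
  intro a ha
  show -m ≤ a ∧ a ≤ m ∧ a ≠ 0
  rcases mem_liftDom.1 ha with rfl | rfl | ⟨h, hd⟩ | ⟨h, hd⟩
  · omega
  · omega
  all_goals
    obtain ⟨hlo, hhi, -⟩ := hD hd
    omega

lemma liftMap_cases (hpos : ∀ a ∈ D, 0 < a → 0 < e a) (hneg : ∀ a ∈ D, a < 0 → e a < 0)
    (ha : a ∈ liftDom D) :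
    (a = 1 ∧ liftMap e a = 1) ∨ (a = -1 ∧ liftMap e a = -1) ∨
      (1 < a ∧ a - 1 ∈ D ∧ 0 < e (a - 1) ∧ liftMap e a = e (a - 1) + 1) ∨
      (a < -1 ∧ a + 1 ∈ D ∧ e (a + 1) < 0 ∧ liftMap e a = e (a + 1) - 1) := by
  rcases mem_liftDom.1 ha with rfl | rfl | ⟨h, hd⟩ | ⟨h, hd⟩
  · exact Or.inl ⟨rfl, liftMap_one e⟩
  · exact Or.inr (Or.inl ⟨rfl, liftMap_neg_one e⟩)
  · exact Or.inr (Or.inr (Or.inl ⟨h, hd, hpos _ hd (by omega), liftMap_of_one_lt h⟩))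
  · exact Or.inr (Or.inr (Or.inr ⟨h, hd, hneg _ hd (by omega), liftMap_of_lt_neg_one h⟩))

lemma liftMap_mem_Zeven {m : ℤ} (hm : 1 ≤ m) (hmem : ∀ a ∈ D, e a ∈ Zeven (m - 1))
    (hpos : ∀ a ∈ D, 0 < a → 0 < e a) (hneg : ∀ a ∈ D, a < 0 → e a < 0)
    (ha : a ∈ liftDom D) : liftMap e a ∈ Zeven m := by
  show -m ≤ liftMap e a ∧ liftMap e a ≤ m ∧ liftMap e a ≠ 0
  rcases liftMap_cases hpos hneg ha with ⟨-, h⟩ | ⟨-, h⟩ | ⟨-, hd, he, h⟩ | ⟨-, hd, he, h⟩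
  · omega
  · omega
  all_goals
    obtain ⟨hlo, hhi, -⟩ := hmem _ hd
    omega

lemma strictMonoOn_liftMap (he : StrictMonoOn e D) (hpos : ∀ a ∈ D, 0 < a → 0 < e a)
    (hneg : ∀ a ∈ D, a < 0 → e a < 0) : StrictMonoOn (liftMap e) (liftDom D) := by
  intro a ha b hb hab
  rcases liftMap_cases hpos hneg ha with ⟨ha, hfa⟩ | ⟨ha, hfa⟩ | ⟨ha, hda, hea, hfa⟩ |
      ⟨ha, hda, hea, hfa⟩ <;>
  rcases liftMap_cases hpos hneg hb with ⟨hb, hfb⟩ | ⟨hb, hfb⟩ | ⟨hb, hdb, heb, hfb⟩ |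
      ⟨hb, hdb, heb, hfb⟩ <;>
  first
    | omega
    | (have := he hda hdb (by omega); omega)

end Lift

theorem lift_partial_endomorphism_general (m : ℤ) (hm : 3 ≤ m)
    (D : Set ℤ) (e : ℤ → ℤ)
    (hD : D ⊆ Zeven (m - 1))
    (hDcl : ∀ a ∈ D, ∀ b ∈ D, min a b ∈ D ∧ max a b ∈ D ∧ -a ∈ D ∧ sImp a b ∈ D)
    (hmem : ∀ a ∈ D, e a ∈ Zeven (m - 1))
    (hmin : ∀ a ∈ D, ∀ b ∈ D, e (min a b) = min (e a) (e b))
    (hneg : ∀ a ∈ D, e (-a) = -(e a))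
    (himp : ∀ a ∈ D, ∀ b ∈ D, e (sImp a b) = sImp (e a) (e b)) :
    let Dbar : Set ℤ :=
      {1, -1} ∪ {a | 1 < a ∧ a - 1 ∈ D} ∪ {a | a < -1 ∧ a + 1 ∈ D}
    let ebar : ℤ → ℤ := fun a =>
      if a = 1 then 1 else if a = -1 then -1
      else if 1 < a then e (a - 1) + 1 else e (a + 1) - 1
    (Dbar ⊆ Zeven m) ∧
    ((1 : ℤ) ∈ Dbar) ∧
    (∀ a ∈ Dbar, ∀ b ∈ Dbar,
      min a b ∈ Dbar ∧ max a b ∈ Dbar ∧ -a ∈ Dbar ∧ sImp a b ∈ Dbar) ∧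
    (∀ a ∈ Dbar, ebar a ∈ Zeven m) ∧
    (∀ a ∈ Dbar, ∀ b ∈ Dbar,
      ebar (min a b) = min (ebar a) (ebar b) ∧
      ebar (max a b) = max (ebar a) (ebar b) ∧
      ebar (-a) = -(ebar a) ∧
      ebar (sImp a b) = sImp (ebar a) (ebar b)) ∧
    ebar 1 = 1 := by
  intro Dbar ebar
  have hDneg : ∀ a ∈ D, -a ∈ D := fun a ha => (hDcl a ha a ha).2.2.1
  have he : StrictMonoOn e D :=
    strictMonoOn_of_map_sImp (fun a ha => (hmem a ha).2.2) hDneg hmin hneg himp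
  have hpos : ∀ a ∈ D, 0 < a → 0 < e a := fun _ => he.pos_of_pos hDneg hneg
  have hnegs : ∀ a ∈ D, a < 0 → e a < 0 := fun _ => he.neg_of_neg hDneg hneg
  have hlift : StrictMonoOn (liftMap e) (liftDom D) := strictMonoOn_liftMap he hpos hnegs
  have hliftDom_neg : ∀ a ∈ liftDom D, -a ∈ liftDom D := fun _ => neg_mem_liftDom hDneg
  have hliftMap_neg : ∀ a ∈ liftDom D, liftMap e (-a) = -liftMap e a :=
    fun _ => liftMap_neg hneg
  exact ⟨liftDom_subset_Zeven (by omega) hD, one_mem_liftDom,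
    fun a ha b hb => ⟨min_rec' _ ha hb, max_rec' _ ha hb, hliftDom_neg a ha,
      sImp_mem_of_neg_mem hliftDom_neg ha hb⟩,
    fun _ => liftMap_mem_Zeven (by omega) hmem hpos hnegs,
    fun a ha b hb => ⟨hlift.monotoneOn.map_min ha hb, hlift.monotoneOn.map_max ha hb,
      hliftMap_neg a ha, hlift.map_sImp hliftDom_neg hliftMap_neg ha hb⟩,
    liftMap_one e⟩

/-- For m ≥ 3, lifting a partial endomorphism e of Z_{2(m-1)} to the map ē
gives a partial endomorphism of the Sugihara monoid W_{2m} (t = 1). -/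
theorem lift_partial_endomorphism (m : ℤ) (hm : 3 ≤ m)
    (D : Set ℤ) (e : ℤ → ℤ)
    (hD : D ⊆ Zeven (m - 1))
    (hDcl : ∀ a ∈ D, ∀ b ∈ D, min a b ∈ D ∧ max a b ∈ D ∧ -a ∈ D ∧ sImp a b ∈ D)
    (hmem : ∀ a ∈ D, e a ∈ Zeven (m - 1))
    (hmin : ∀ a ∈ D, ∀ b ∈ D, e (min a b) = min (e a) (e b))
    (hmax : ∀ a ∈ D, ∀ b ∈ D, e (max a b) = max (e a) (e b))
    (hneg : ∀ a ∈ D, e (-a) = -(e a))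
    (himp : ∀ a ∈ D, ∀ b ∈ D, e (sImp a b) = sImp (e a) (e b)) :
    let Dbar : Set ℤ :=
      {1, -1} ∪ {a | 1 < a ∧ a - 1 ∈ D} ∪ {a | a < -1 ∧ a + 1 ∈ D}
    let ebar : ℤ → ℤ := fun a =>
      if a = 1 then 1 else if a = -1 then -1
      else if 1 < a then e (a - 1) + 1 else e (a + 1) - 1
    (Dbar ⊆ Zeven m) ∧
    ((1 : ℤ) ∈ Dbar) ∧
    (∀ a ∈ Dbar, ∀ b ∈ Dbar,
      min a b ∈ Dbar ∧ max a b ∈ Dbar ∧ -a ∈ Dbar ∧ sImp a b ∈ Dbar) ∧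
    (∀ a ∈ Dbar, ebar a ∈ Zeven m) ∧
    (∀ a ∈ Dbar, ∀ b ∈ Dbar,
      ebar (min a b) = min (ebar a) (ebar b) ∧
      ebar (max a b) = max (ebar a) (ebar b) ∧
      ebar (-a) = -(ebar a) ∧
      ebar (sImp a b) = sImp (ebar a) (ebar b)) ∧
    ebar 1 = 1 :=
  lift_partial_endomorphism_general m hm D e hD hDcl hmem hmin hneg himp
end

section
/- For m ≥ 2 and n ≥ 1 with n ≤ m-1, given strictly increasing sequences 0 < a₁ < ⋯ < a_p and 0 < b₁ < ⋯ < b_p in {1,…,m-1}, there exists a partial endomorphism e of the Sugihara algebra Z_{2m-1} with e(aᵢ) = bᵢ for all i, e(-aᵢ) = -bᵢ, and e(0) = 0 (i.e., the subset {0, ±a₁, …, ±a_p} is the universe of a subalgebra and the map sending 0↦0, ±aᵢ↦±bᵢ preserves min, max, negation, and the Sugihara implication). -/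
/-- Interpolation by partial endomorphisms of Z_{2m-1}: any strictly increasing
p-tuple of positive elements can be mapped to any other, symmetrically, fixing 0. -/
theorem partial_endo_interpolation (m : ℤ) (hm : 2 ≤ m) (p : ℕ) (hp : 1 ≤ p)
    (hpm : (p : ℤ) ≤ m - 1)
    (a b : Fin p → ℤ) (ha : StrictMono a) (hb : StrictMono b)
    (hapos : ∀ i, 0 < a i ∧ a i ≤ m - 1)
    (hbpos : ∀ i, 0 < b i ∧ b i ≤ m - 1) :
    ∃ e : ℤ → ℤ,
      e 0 = 0 ∧
      (∀ i, e (a i) = b i ∧ e (-(a i)) = -(b i)) ∧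
      (let D : Set ℤ := insert 0 (Set.range a ∪ Set.range (fun i => -(a i)))
       (∀ x ∈ D, ∀ y ∈ D, min x y ∈ D ∧ max x y ∈ D ∧ -x ∈ D ∧ sImp x y ∈ D) ∧
       (∀ x ∈ D, e x ∈ Zodd m) ∧
       (∀ x ∈ D, ∀ y ∈ D,
         e (min x y) = min (e x) (e y) ∧
         e (max x y) = max (e x) (e y) ∧
         e (-x) = -(e x) ∧
         e (sImp x y) = sImp (e x) (e y))) := by
  classical
  set g : ℤ → ℤ := fun x => if h : ∃ i, a i = x then b h.choose else 0 with hgdef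
  set e : ℤ → ℤ := fun x => if x < 0 then -g (-x) else g x with hedef
  have hg0 : g 0 = 0 := by
    have : ¬ ∃ i, a i = 0 := by
      rintro ⟨i, hi⟩; exact absurd hi (ne_of_gt (hapos i).1)
    simp [hgdef, this]
  have hga : ∀ i, g (a i) = b i := by
    intro i
    have hex : ∃ j, a j = a i := ⟨i, rfl⟩
    have : hex.choose = i := ha.injective hex.choose_spec
    simp [hgdef, dif_pos hex, this]
  have he0 : e 0 = 0 := by simp [hedef, hg0]
  have hea : ∀ i, e (a i) = b i := by
    intro i
    have : ¬ a i < 0 := not_lt.mpr (hapos i).1.le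
    simp [hedef, this, hga]
  have hena : ∀ i, e (-(a i)) = -(b i) := by
    intro i
    have : -(a i) < 0 := neg_neg_of_pos (hapos i).1
    simp [hedef, this, hga, (hapos i).1]
  set D : Set ℤ := insert 0 (Set.range a ∪ Set.range (fun i => -(a i))) with hD
  have hmemD : ∀ x, x ∈ D ↔ x = 0 ∨ (∃ i, a i = x) ∨ (∃ i, -(a i) = x) := by
    intro x
    simp [D, Set.mem_insert_iff, Set.mem_union, Set.mem_range]
  -- strict monotonicity of e on D
  have hsm : ∀ x ∈ D, ∀ y ∈ D, x < y → e x < e y := by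
    intro x hx y hy hxy
    rcases (hmemD x).mp hx with rfl | ⟨i, rfl⟩ | ⟨i, rfl⟩ <;>
      rcases (hmemD y).mp hy with rfl | ⟨j, rfl⟩ | ⟨j, rfl⟩
    · exact absurd hxy (lt_irrefl 0)
    · rw [he0, hea]; exact (hbpos j).1
    · exfalso; have := (hapos j).1; omega
    · exfalso; have := (hapos i).1; omega
    · rw [hea, hea]; exact hb (ha.lt_iff_lt.mp hxy)
    · exfalso; have := (hapos i).1; have := (hapos j).1; omega
    · rw [hena, he0]; have := (hbpos i).1; omega
    · rw [hena, hea]; have := (hbpos i).1; have := (hbpos j).1; omega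
    · rw [hena, hena]
      have : a j < a i := by omega
      have := hb (ha.lt_iff_lt.mp this); omega
  have hmono : ∀ x ∈ D, ∀ y ∈ D, x ≤ y → e x ≤ e y := by
    intro x hx y hy hxy
    rcases eq_or_lt_of_le hxy with rfl | h
    · exact le_rfl
    · exact (hsm x hx y hy h).le
  have hle_iff : ∀ x ∈ D, ∀ y ∈ D, (e x ≤ e y ↔ x ≤ y) := by
    intro x hx y hy
    constructor
    · intro h
      by_contra hc
      exact absurd h (not_le.mpr (hsm y hy x hx (not_le.mp hc)))
    · exact hmono x hx y hy
  have hnegD : ∀ x ∈ D, -x ∈ D := by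
    intro x hx
    rcases (hmemD x).mp hx with rfl | ⟨i, rfl⟩ | ⟨i, rfl⟩
    · rw [hmemD]; left; ring
    · rw [hmemD]; right; right; exact ⟨i, rfl⟩
    · rw [hmemD]; right; left; exact ⟨i, by ring⟩
  have heneg : ∀ x ∈ D, e (-x) = -(e x) := by
    intro x hx
    rcases (hmemD x).mp hx with rfl | ⟨i, rfl⟩ | ⟨i, rfl⟩
    · rw [neg_zero, he0]; ring
    · rw [hena, hea]
    · rw [neg_neg, hea, hena]; ring
  have hminD : ∀ x ∈ D, ∀ y ∈ D, min x y ∈ D := by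
    intro x hx y hy
    rcases min_choice x y with h | h <;> rw [h] <;> assumption
  have hmaxD : ∀ x ∈ D, ∀ y ∈ D, max x y ∈ D := by
    intro x hx y hy
    rcases max_choice x y with h | h <;> rw [h] <;> assumption
  have hemin : ∀ x ∈ D, ∀ y ∈ D, e (min x y) = min (e x) (e y) := by
    intro x hx y hy
    rcases le_total x y with h | h
    · rw [min_eq_left h, min_eq_left (hmono x hx y hy h)]
    · rw [min_eq_right h, min_eq_right (hmono y hy x hx h)]
  have hemax : ∀ x ∈ D, ∀ y ∈ D, e (max x y) = max (e x) (e y) := by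
    intro x hx y hy
    rcases le_total x y with h | h
    · rw [max_eq_right h, max_eq_right (hmono x hx y hy h)]
    · rw [max_eq_left h, max_eq_left (hmono y hy x hx h)]
  have hclos : ∀ x ∈ D, ∀ y ∈ D, min x y ∈ D ∧ max x y ∈ D ∧ -x ∈ D ∧ sImp x y ∈ D := by
    intro x hx y hy
    refine ⟨hminD x hx y hy, hmaxD x hx y hy, hnegD x hx, ?_⟩
    unfold sImp
    split
    · exact hmaxD _ (hnegD x hx) _ hy
    · exact hminD _ (hnegD x hx) _ hy
  have hrange : ∀ x ∈ D, e x ∈ Zodd m := by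
    intro x hx
    rcases (hmemD x).mp hx with rfl | ⟨i, rfl⟩ | ⟨i, rfl⟩
    · rw [he0]; constructor <;> omega
    · rw [hea]; have := (hbpos i).1; have := (hbpos i).2
      constructor <;> omega
    · rw [hena]; have := (hbpos i).1; have := (hbpos i).2
      constructor <;> omega
  have hhom : ∀ x ∈ D, ∀ y ∈ D,
      e (min x y) = min (e x) (e y) ∧ e (max x y) = max (e x) (e y) ∧
      e (-x) = -(e x) ∧ e (sImp x y) = sImp (e x) (e y) := by
    intro x hx y hy
    refine ⟨hemin x hx y hy, hemax x hx y hy, heneg x hx, ?_⟩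
    unfold sImp
    by_cases h : x ≤ y
    · rw [if_pos h, if_pos ((hle_iff x hx y hy).mpr h),
        hemax _ (hnegD x hx) _ hy, heneg x hx]
    · rw [if_neg h, if_neg (fun hc => h ((hle_iff x hx y hy).mp hc)),
        hemin _ (hnegD x hx) _ hy, heneg x hx]
  exact ⟨e, he0, fun i => ⟨hea i, hena i⟩, hclos, hrange, hhom⟩
end
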